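/- Let S ∈ ℝ^{J×K} and t ∈ ℝ^J, and suppose the polyhedron { ξ ∈ ℝ^K : ξ ≥ 0, Sξ = t } is nonempty and bounded. Then the matrix SᵀS is strictly copositive, i.e., ξᵀSᵀSξ > 0 for every ξ ∈ ℝ^K with ξ ≥ 0 and ξ ≠ 0. -/

import Mathlib

/-!
If `Sξ = 0` for some `ξ ≥ 0`, `ξ ≠ 0`, then `ξ` is a recession direction of the polyhedron
`{ξ ≥ 0 : Sξ = t}`: adding any nonnegative multiple of it to a feasible point stays feasible,
which contradicts boundedness. Hence `ξᵀSᵀSξ = ‖Sξ‖² > 0`.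
-/

open Matrix

theorem Bornology.IsBounded.eq_zero_of_add_smul_mem {E : Type*} [NormedAddCommGroup E]
    [NormedSpace ℝ E] {s : Set E} (hs : Bornology.IsBounded s) {x v : E} (hx : x ∈ s)
    (hv : ∀ c : ℝ, 0 ≤ c → x + c • v ∈ s) : v = 0 := by
  obtain ⟨C, hC⟩ := hs.exists_norm_le
  by_contra hv0
  have hnorm : 0 < ‖v‖ := norm_pos_iff.mpr hv0
  set c := (2 * C + 1) / ‖v‖
  have hc : 0 ≤ c := div_nonneg (by linarith [(norm_nonneg x).trans (hC x hx)]) hnorm.le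
  have hcv : ‖c • v‖ = 2 * C + 1 := by
    rw [norm_smul, Real.norm_of_nonneg hc, div_mul_cancel₀ _ hnorm.ne']
  have : ‖c • v‖ ≤ 2 * C := calc
    ‖c • v‖ = ‖(x + c • v) - x‖ := by rw [add_sub_cancel_left]
    _ ≤ ‖x + c • v‖ + ‖x‖ := norm_sub_le _ _
    _ ≤ 2 * C := by linarith [hC _ (hv c hc), hC x hx]
  linarith

theorem add_smul_mem_nonneg_solutions {m n : Type*} [Fintype n] {S : Matrix m n ℝ} {t : m → ℝ}
    {x v : n → ℝ} (hx : x ∈ {ξ : n → ℝ | (∀ i, 0 ≤ ξ i) ∧ S *ᵥ ξ = t})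
    (hv : ∀ i, 0 ≤ v i) (hSv : S *ᵥ v = 0) {c : ℝ} (hc : 0 ≤ c) :
    x + c • v ∈ {ξ : n → ℝ | (∀ i, 0 ≤ ξ i) ∧ S *ᵥ ξ = t} :=
  ⟨fun i => add_nonneg (hx.1 i) (mul_nonneg hc (hv i)), by
    rw [mulVec_add, mulVec_smul, hSv, smul_zero, add_zero, hx.2]⟩

theorem dotProduct_transpose_mul_self_mulVec {m n : Type*} [Fintype m] [Fintype n]
    {R : Type*} [CommSemiring R] (S : Matrix m n R) (v : n → R) :
    v ⬝ᵥ (Sᵀ * S) *ᵥ v = S *ᵥ v ⬝ᵥ S *ᵥ v := by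
  rw [← mulVec_mulVec, dotProduct_mulVec, vecMul_transpose]

/-- If the polyhedron `{ξ ≥ 0 : Sξ = t}` is nonempty and bounded, then `SᵀS` is strictly
copositive. -/
theorem StS_strictly_copositive
    (J K : ℕ) (S : Matrix (Fin J) (Fin K) ℝ) (t : Fin J → ℝ)
    (hne : {ξ : Fin K → ℝ | (∀ i, 0 ≤ ξ i) ∧ S.mulVec ξ = t}.Nonempty)
    (hbdd : Bornology.IsBounded {ξ : Fin K → ℝ | (∀ i, 0 ≤ ξ i) ∧ S.mulVec ξ = t}) :
    ∀ ξ : Fin K → ℝ, (∀ i, 0 ≤ ξ i) → ξ ≠ 0 →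
      0 < ξ ⬝ᵥ (Sᵀ * S).mulVec ξ := by
  intro ξ hξ hξ0
  rw [dotProduct_transpose_mul_self_mulVec]
  have hnonneg : 0 ≤ S *ᵥ ξ ⬝ᵥ S *ᵥ ξ := Fintype.sum_nonneg fun i => mul_self_nonneg ((S *ᵥ ξ) i)
  refine hnonneg.lt_of_ne' fun hzero => hξ0 ?_
  have hSξ : S *ᵥ ξ = 0 := dotProduct_self_eq_zero.mp hzero
  obtain ⟨x, hx⟩ := hne
  exact hbdd.eq_zero_of_add_smul_mem hx fun c hc => add_smul_mem_nonneg_solutions hx hξ hSξ hc
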